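/- arXiv:2210.13396 — 4 statements merged into one kernel-verified Lean document; each statement's English description precedes it below -/
import Mathlib

section
/- Suppose reward estimates satisfy |r_i(a) − r̂_i(a)| ≤ b_i(a) for all players i and joint actions a, and let π^output be a minimizer over product policies π of max_i [V̄_i^{†,π_{-i}} − V̲_i^π]. Then for any Nash equilibrium π* (i.e., Gap(π*) = 0), Gap(π^output) ≤ 2 max_i [max_{π' deterministic} E_{a∼(π'_i, π*_{-i})} b_i(a) + E_{a∼π*} b_i(a)]. -/
open Finset Function

/-- A probability distribution over a finite set. -/
def IsDist {α : Type*} [Fintype α] (μ : α → ℝ) : Prop :=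
  (∀ x, 0 ≤ μ x) ∧ ∑ x, μ x = 1

/-- Expected reward of player `i` under product policy `π`. -/
def val {m : ℕ} {A : Fin m → Type*} [∀ i, Fintype (A i)]
    (r : Fin m → (∀ i, A i) → ℝ) (π : ∀ i, A i → ℝ) (i : Fin m) : ℝ :=
  ∑ a : ∀ i, A i, (∏ j, π j (a j)) * r i a

/-- The surrogate gap `max_i [V̄_i^{†,π_{-i}} − V̲_i^π]` built from reward
estimates `r̂` and bonus `b`. -/
noncomputable def surrogate {m : ℕ} {A : Fin m → Type*} [∀ i, Fintype (A i)]
    (rhat b : Fin m → (∀ i, A i) → ℝ) (π : ∀ i, A i → ℝ) : ℝ :=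
  ⨆ i, ((⨆ μ : {μ : A i → ℝ // IsDist μ},
      val (fun j a => rhat j a + b j a) (Function.update π i μ.1) i)
    - val (fun j a => rhat j a - b j a) π i)

section Aux

variable {m : ℕ} {A : Fin m → Type*} [∀ i, Fintype (A i)]
  [∀ i, DecidableEq (A i)] [∀ i, Nonempty (A i)]

lemma isDist_delta (i : Fin m) (x : A i) :
    IsDist (fun y => if y = x then (1:ℝ) else 0) :=
  ⟨fun y => by dsimp only; split <;> norm_num, by simp⟩

instance (i : Fin m) : Nonempty {μ : A i → ℝ // IsDist μ} :=
  ⟨⟨_, isDist_delta i (Classical.arbitrary _)⟩⟩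

lemma isDist_update {π : ∀ i, A i → ℝ} (hπ : ∀ i, IsDist (π i)) {i : Fin m}
    {μ : A i → ℝ} (hμ : IsDist μ) (j : Fin m) : IsDist (Function.update π i μ j) := by
  rcases eq_or_ne j i with rfl | h
  · simpa using hμ
  · simpa [Function.update_of_ne h] using hπ j

lemma val_le_sum_abs (f : Fin m → (∀ i, A i) → ℝ) {π : ∀ i, A i → ℝ}
    (hπ : ∀ i, IsDist (π i)) (i : Fin m) : val f π i ≤ ∑ a, |f i a| := by
  refine Finset.sum_le_sum fun a _ => ?_
  have h0 : (0:ℝ) ≤ ∏ j, π j (a j) := Finset.prod_nonneg fun j _ => (hπ j).1 _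
  have h1 : (∏ j, π j (a j)) ≤ 1 := by
    refine Finset.prod_le_one (fun j _ => (hπ j).1 _) (fun j _ => ?_)
    calc π j (a j) ≤ ∑ y, π j y :=
          Finset.single_le_sum (fun y _ => (hπ j).1 y) (mem_univ (a j))
      _ = 1 := (hπ j).2
  calc (∏ j, π j (a j)) * f i a ≤ (∏ j, π j (a j)) * |f i a| :=
        mul_le_mul_of_nonneg_left (le_abs_self _) h0
    _ ≤ 1 * |f i a| := mul_le_mul_of_nonneg_right h1 (abs_nonneg _)
    _ = |f i a| := one_mul _

lemma bddAbove_val (f : Fin m → (∀ i, A i) → ℝ) {π : ∀ i, A i → ℝ}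
    (hπ : ∀ i, IsDist (π i)) (i : Fin m) :
    BddAbove (Set.range fun μ : {μ : A i → ℝ // IsDist μ} =>
      val f (Function.update π i μ.1) i) := by
  refine ⟨∑ a, |f i a|, ?_⟩
  rintro _ ⟨μ, rfl⟩
  exact val_le_sum_abs f (isDist_update hπ μ.2) i

lemma val_mono (f g : Fin m → (∀ i, A i) → ℝ) {π : ∀ i, A i → ℝ}
    (hπ : ∀ j x, 0 ≤ π j x) (i : Fin m) (hfg : ∀ a, f i a ≤ g i a) :
    val f π i ≤ val g π i :=
  Finset.sum_le_sum fun a _ =>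
    mul_le_mul_of_nonneg_left (hfg a) (Finset.prod_nonneg fun j _ => hπ j _)

lemma val_combo (f g : Fin m → (∀ i, A i) → ℝ) (c : ℝ) (π : ∀ i, A i → ℝ) (i : Fin m) :
    val (fun j a => f j a + c * g j a) π i = val f π i + c * val g π i := by
  simp [_root_.val, mul_add, Finset.sum_add_distrib, Finset.mul_sum, mul_left_comm]

lemma val_update_decomp (f : Fin m → (∀ i, A i) → ℝ) (π : ∀ i, A i → ℝ) (i : Fin m)
    (μ : A i → ℝ) :
    val f (Function.update π i μ) i
      = ∑ x, μ x * val f (Function.update π i fun y => if y = x then 1 else 0) i := by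
  have key : ∀ (ν : A i → ℝ) (a : ∀ j, A j),
      (∏ j, Function.update π i ν j (a j))
        = ν (a i) * ∏ j ∈ univ.erase i, π j (a j) := by
    intro ν a
    rw [← Finset.mul_prod_erase univ _ (mem_univ i), Function.update_self]
    congr 1
    exact Finset.prod_congr rfl fun j hj => by
      rw [Function.update_of_ne (Finset.ne_of_mem_erase hj)]
  unfold _root_.val
  simp only [key, Finset.mul_sum]
  rw [Finset.sum_comm]
  refine Finset.sum_congr rfl fun a _ => ?_
  rw [Finset.sum_eq_single (a i)]
  · simp [mul_assoc]
  · intro x _ hx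
    simp [Ne.symm hx]
  · simp

lemma val_update_le_sup (f : Fin m → (∀ i, A i) → ℝ) (π : ∀ i, A i → ℝ) (i : Fin m)
    {μ : A i → ℝ} (hμ : IsDist μ) :
    val f (Function.update π i μ) i
      ≤ ⨆ x : A i, val f (Function.update π i fun y => if y = x then 1 else 0) i := by
  rw [val_update_decomp]
  set c := fun x : A i => val f (Function.update π i fun y => if y = x then (1:ℝ) else 0) i with hc
  have hbdd : BddAbove (Set.range c) := Set.Finite.bddAbove (Set.finite_range c)
  calc ∑ x, μ x * c x ≤ ∑ x, μ x * ⨆ x', c x' :=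
        Finset.sum_le_sum fun x _ =>
          mul_le_mul_of_nonneg_left (le_ciSup hbdd x) (hμ.1 x)
    _ = ⨆ x', c x' := by rw [← Finset.sum_mul, hμ.2, one_mul]

end Aux

/-- if `|r_i(a) − r̂_i(a)| ≤ b_i(a)` everywhere, `π*` is a Nash
equilibrium, and `πout` minimizes the surrogate gap over product policies, then
`Gap(πout) ≤ 2 max_i [max_{pure deviation x} E_{(δ_x, π*_{-i})} b_i + E_{π*} b_i]`. -/
theorem stmt2 {m : ℕ} (hm : 0 < m) (A : Fin m → Type*) [∀ i, Fintype (A i)]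
    [∀ i, DecidableEq (A i)] [∀ i, Nonempty (A i)]
    (r rhat b : Fin m → (∀ i, A i) → ℝ)
    (hb : ∀ i a, |r i a - rhat i a| ≤ b i a)
    (πstar : ∀ i, A i → ℝ) (hπstar : ∀ i, IsDist (πstar i))
    (hNE : ∀ i (μ : A i → ℝ), IsDist μ →
        val r (Function.update πstar i μ) i ≤ val r πstar i)
    (πout : ∀ i, A i → ℝ) (hπout : ∀ i, IsDist (πout i))
    (hmin : ∀ π : ∀ i, A i → ℝ, (∀ i, IsDist (π i)) →
        surrogate rhat b πout ≤ surrogate rhat b π) :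
    (⨆ i, ((⨆ μ : {μ : A i → ℝ // IsDist μ},
        val r (Function.update πout i μ.1) i) - val r πout i))
      ≤ 2 * ⨆ i, ((⨆ x : A i,
            val b (Function.update πstar i (fun y => if y = x then 1 else 0)) i)
          + val b πstar i) := by
  haveI : Nonempty (Fin m) := ⟨⟨0, hm⟩⟩
  have hub : ∀ i a, r i a ≤ rhat i a + b i a := fun i a => by
    have := abs_le.mp (hb i a); linarith
  have hlb : ∀ i a, rhat i a - b i a ≤ r i a := fun i a => by
    have := abs_le.mp (hb i a); linarith
  set H := fun i : Fin m => ((⨆ x : A i,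
      val b (Function.update πstar i (fun y => if y = x then 1 else 0)) i)
    + val b πstar i) with hH
  have hHbdd : BddAbove (Set.range H) := Set.Finite.bddAbove (Set.finite_range H)
  -- Step 1 : true gap of πout ≤ surrogate of πout
  have step1 : (⨆ i, ((⨆ μ : {μ : A i → ℝ // IsDist μ},
      val r (Function.update πout i μ.1) i) - val r πout i))
      ≤ surrogate rhat b πout := by
    refine ciSup_le fun i => ?_
    have hSi : ((⨆ μ : {μ : A i → ℝ // IsDist μ},
        val r (Function.update πout i μ.1) i) - val r πout i)
        ≤ ((⨆ μ : {μ : A i → ℝ // IsDist μ},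
        val (fun j a => rhat j a + b j a) (Function.update πout i μ.1) i)
        - val (fun j a => rhat j a - b j a) πout i) := by
      refine sub_le_sub ?_ ?_
      · exact ciSup_mono (bddAbove_val _ hπout i) fun μ =>
          val_mono _ _ (fun j x => (isDist_update hπout μ.2 j).1 x) i (hub i)
      · exact val_mono _ _ (fun j x => (hπout j).1 x) i (hlb i)
    refine hSi.trans ?_
    have := le_ciSup (f := fun i : Fin m => ((⨆ μ : {μ : A i → ℝ // IsDist μ},
        val (fun j a => rhat j a + b j a) (Function.update πout i μ.1) i)
        - val (fun j a => rhat j a - b j a) πout i))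
      (Set.Finite.bddAbove (Set.finite_range _)) i
    exact this
  -- Step 2 : surrogate of πstar ≤ 2 * sup H
  have step2 : surrogate rhat b πstar ≤ 2 * ⨆ i, H i := by
    refine ciSup_le fun i => ?_
    have h1 : (⨆ μ : {μ : A i → ℝ // IsDist μ},
        val (fun j a => rhat j a + b j a) (Function.update πstar i μ.1) i)
        ≤ val r πstar i + 2 * ⨆ x : A i,
            val b (Function.update πstar i (fun y => if y = x then 1 else 0)) i := by
      refine ciSup_le fun μ => ?_
      have hA : val (fun j a => rhat j a + b j a) (Function.update πstar i μ.1) i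
          ≤ val (fun j a => r j a + 2 * b j a) (Function.update πstar i μ.1) i :=
        val_mono _ _ (fun j x => (isDist_update hπstar μ.2 j).1 x) i
          (fun a => by have := abs_le.mp (hb i a); linarith)
      have hB := val_combo r b 2 (Function.update πstar i μ.1) i
      have hC := hNE i μ.1 μ.2
      have hD := val_update_le_sup b πstar i μ.2
      linarith
    have h2 : val r πstar i - 2 * val b πstar i
        ≤ val (fun j a => rhat j a - b j a) πstar i := by
      have hA : val (fun j a => r j a + (-2) * b j a) πstar i
          ≤ val (fun j a => rhat j a - b j a) πstar i :=
        val_mono _ _ (fun j x => (hπstar j).1 x) i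
          (fun a => by have := abs_le.mp (hb i a); linarith)
      have hB := val_combo r b (-2) πstar i
      linarith
    have hHi : H i ≤ ⨆ i, H i := le_ciSup hHbdd i
    have : ((⨆ μ : {μ : A i → ℝ // IsDist μ},
        val (fun j a => rhat j a + b j a) (Function.update πstar i μ.1) i)
        - val (fun j a => rhat j a - b j a) πstar i) ≤ 2 * H i := by
      rw [hH]; dsimp only; linarith
    linarith
  exact step1.trans ((hmin πstar hπstar).trans step2)
end

section
/- There exist two deterministic congestion games M₅, M₆ (two players, two facilities, full action sets) and a distribution ρ over joint actions such that: (i) the game-level reward (sum of both players' rewards) of every joint action in the support of ρ is identical in M₅ and M₆; (ii) for every product policy π, Gap_{M₅}(π) + Gap_{M₆}(π) ≥ 1/2. -/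
open Finset Function

/-- Number of players choosing facility `f₁`; an action `(b₁, b₂)` means
"choose f₁ iff b₁, choose f₂ iff b₂". -/
def nf1 (a : Fin 2 → Bool × Bool) : ℕ :=
  (if (a 0).1 then 1 else 0) + (if (a 1).1 then 1 else 0)

/-- Number of players choosing facility `f₂`. -/
def nf2 (a : Fin 2 → Bool × Bool) : ℕ :=
  (if (a 0).2 then 1 else 0) + (if (a 1).2 then 1 else 0)

/-- Reward of player `i`: the sum of `r^f(n^f)` over facilities in her action. -/
def pay2 (r1 r2 : ℕ → ℝ) (a : Fin 2 → Bool × Bool) (i : Fin 2) : ℝ :=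
  (if (a i).1 then r1 (nf1 a) else 0) + (if (a i).2 then r2 (nf2 a) else 0)

/-- Expected reward of player `i` under product policy `π`. -/
def valG (r1 r2 : ℕ → ℝ) (π : Fin 2 → Bool × Bool → ℝ) (i : Fin 2) : ℝ :=
  ∑ a : Fin 2 → Bool × Bool, (∏ j, π j (a j)) * pay2 r1 r2 a i

/-- The Nash gap `max_i [max_{π'_i} V_i^{π'_i,π_{-i}} − V_i^π]` of a product
policy `π` in the congestion game with facility rewards `r1, r2`. -/
noncomputable def gapG (r1 r2 : ℕ → ℝ) (π : Fin 2 → Bool × Bool → ℝ) : ℝ :=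
  ⨆ i, ((⨆ μ : {μ : Bool × Bool → ℝ // IsDist μ},
      valG r1 r2 (Function.update π i μ.1) i) - valG r1 r2 π i)

/-- Facility rewards of game M₅ : r^{f₁}(1)=1, r^{f₁}(2)=1/2. -/
noncomputable def r1M5 : ℕ → ℝ := fun n => if n = 2 then 1/2 else 1
/-- r^{f₂}(1)=−1, r^{f₂}(2)=−1. -/
noncomputable def r2M5 : ℕ → ℝ := fun _ => -1
/-- Facility rewards of game M₆ : r^{f₁}(1)=1, r^{f₁}(2)=−1/2. -/
noncomputable def r1M6 : ℕ → ℝ := fun n => if n = 2 then -1/2 else 1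
/-- r^{f₂}(1)=1, r^{f₂}(2)=−1. -/
noncomputable def r2M6 : ℕ → ℝ := fun n => if n = 2 then -1 else 1

/-- The distribution ρ: mass 1/5 on each of ({f₂},{f₂}), ({f₁},∅), (∅,{f₁}),
({f₁,f₂},{f₁}), ({f₁},{f₁,f₂}). -/
noncomputable def ρ8 (a : Fin 2 → Bool × Bool) : ℝ :=
  if a = ![(false, true), (false, true)] ∨ a = ![(true, false), (false, false)] ∨
      a = ![(false, false), (true, false)] ∨ a = ![(true, true), (true, false)] ∨
      a = ![(true, false), (true, true)] then 1/5 else 0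

lemma sum_pi_two {γ : Type*} [Fintype γ] (F : (Fin 2 → γ) → ℝ) :
    ∑ a : Fin 2 → γ, F a = ∑ p : γ × γ, F ![p.1, p.2] := by
  rw [← Equiv.sum_comp (finTwoArrowEquiv γ).symm F]
  simp [finTwoArrowEquiv]

lemma pay2_le_two (r1 r2 : ℕ → ℝ) (h1 : ∀ n, |r1 n| ≤ 1) (h2 : ∀ n, |r2 n| ≤ 1)
    (a : Fin 2 → Bool × Bool) (i : Fin 2) : pay2 r1 r2 a i ≤ 2 := by
  have e1 := abs_le.1 (h1 (nf1 a))
  have e2 := abs_le.1 (h2 (nf2 a))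
  unfold pay2
  split_ifs <;> linarith [e1.1, e1.2, e2.1, e2.2]

lemma sum_prod_pi (π : Fin 2 → Bool × Bool → ℝ) (hπ : ∀ j, IsDist (π j)) :
    ∑ a : Fin 2 → Bool × Bool, (∏ j, π j (a j)) = 1 := by
  rw [sum_pi_two (fun a => ∏ j, π j (a j))]
  simp only [Fin.prod_univ_two, Matrix.cons_val_zero, Matrix.cons_val_one, Matrix.head_cons]
  rw [Fintype.sum_prod_type, ← Finset.sum_mul_sum]
  rw [(hπ 0).2, (hπ 1).2]
  norm_num

lemma valG_le_two (r1 r2 : ℕ → ℝ) (h1 : ∀ n, |r1 n| ≤ 1) (h2 : ∀ n, |r2 n| ≤ 1)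
    (π : Fin 2 → Bool × Bool → ℝ) (hπ : ∀ j, IsDist (π j)) (i : Fin 2) :
    valG r1 r2 π i ≤ 2 := by
  have : valG r1 r2 π i ≤ ∑ a : Fin 2 → Bool × Bool, (∏ j, π j (a j)) * 2 := by
    apply Finset.sum_le_sum
    intro a _
    exact mul_le_mul_of_nonneg_left (pay2_le_two r1 r2 h1 h2 a i)
      (Finset.prod_nonneg fun j _ => (hπ j).1 _)
  calc valG r1 r2 π i ≤ ∑ a : Fin 2 → Bool × Bool, (∏ j, π j (a j)) * 2 := this
    _ = (∑ a : Fin 2 → Bool × Bool, (∏ j, π j (a j))) * 2 := by rw [Finset.sum_mul]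
    _ = 2 := by rw [sum_prod_pi π hπ]; norm_num

lemma update_isDist (π : Fin 2 → Bool × Bool → ℝ) (hπ : ∀ j, IsDist (π j)) (i : Fin 2)
    (μ : Bool × Bool → ℝ) (hμ : IsDist μ) (j : Fin 2) :
    IsDist (Function.update π i μ j) := by
  rcases eq_or_ne j i with h | h
  · subst h; rw [Function.update_self]; exact hμ
  · rw [Function.update_of_ne h]; exact hπ j

lemma gap_ge (r1 r2 : ℕ → ℝ) (h1 : ∀ n, |r1 n| ≤ 1) (h2 : ∀ n, |r2 n| ≤ 1)
    (π : Fin 2 → Bool × Bool → ℝ) (hπ : ∀ j, IsDist (π j)) (i : Fin 2)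
    (μ0 : Bool × Bool → ℝ) (hμ0 : IsDist μ0) :
    valG r1 r2 (Function.update π i μ0) i - valG r1 r2 π i ≤ gapG r1 r2 π := by
  have hb : BddAbove (Set.range fun μ : {μ : Bool × Bool → ℝ // IsDist μ} =>
      valG r1 r2 (Function.update π i μ.1) i) := by
    refine ⟨2, ?_⟩
    rintro v ⟨μ, rfl⟩
    exact valG_le_two r1 r2 h1 h2 _ (update_isDist π hπ i μ.1 μ.2) i
  have step1 : valG r1 r2 (Function.update π i μ0) i ≤
      ⨆ μ : {μ : Bool × Bool → ℝ // IsDist μ}, valG r1 r2 (Function.update π i μ.1) i :=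
    le_ciSup hb ⟨μ0, hμ0⟩
  have step2 : (⨆ μ : {μ : Bool × Bool → ℝ // IsDist μ},
      valG r1 r2 (Function.update π i μ.1) i) - valG r1 r2 π i ≤ gapG r1 r2 π :=
    le_ciSup (f := fun i : Fin 2 => (⨆ μ : {μ : Bool × Bool → ℝ // IsDist μ},
        valG r1 r2 (Function.update π i μ.1) i) - valG r1 r2 π i)
      (Set.Finite.bddAbove (Set.finite_range _)) i
  have : gapG r1 r2 π = ⨆ i : Fin 2, ((⨆ μ : {μ : Bool × Bool → ℝ // IsDist μ},
      valG r1 r2 (Function.update π i μ.1) i) - valG r1 r2 π i) := rfl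
  rw [this]
  linarith

lemma dirac_isDist (d : Bool × Bool) : IsDist (fun b => if b = d then (1:ℝ) else 0) := by
  constructor
  · intro b; by_cases hb : b = d <;> simp [hb]
  · simp

lemma key (x y s t g5 g6 : ℝ) (hx0 : 0 ≤ x) (hx1 : x ≤ 1) (hy0 : 0 ≤ y) (hy1 : y ≤ 1)
    (hs0 : 0 ≤ s) (hs1 : s ≤ 1) (ht0 : 0 ≤ t) (ht1 : t ≤ 1)
    (h50 : (1 - y/2)*(1-x) + s ≤ g5)
    (h51 : (1 - x/2)*(1-y) + t ≤ g5)
    (h60 : 0 ≤ g6)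
    (h61 : (1 - 3/2*y)*(1-x) + (1-2*t)*(1-s) ≤ g6)
    (h62 : (1 - 3/2*x)*(1-y) + (1-2*s)*(1-t) ≤ g6)
    (h63 : (1-2*s)*(1-t) - y*(1 - 3/2*x) ≤ g6) :
    1/2 ≤ g5 + g6 := by
  rcases le_or_gt (1/2) t with h | h
  · linarith [mul_nonneg (by linarith : (0:ℝ) ≤ 1 - x/2) (by linarith : (0:ℝ) ≤ 1 - y)]
  rcases le_or_gt (1/2) s with h2 | h2
  · linarith [mul_nonneg (by linarith : (0:ℝ) ≤ 2 - 2*y) (by linarith : (0:ℝ) ≤ 1 - x),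
      mul_nonneg (by linarith : (0:ℝ) ≤ 1 - 2*t) (by linarith : (0:ℝ) ≤ 1 - s)]
  rcases le_or_gt x (2/3) with h3 | h3
  · linarith [mul_nonneg (by linarith : (0:ℝ) ≤ 1 - y/2) (by linarith : (0:ℝ) ≤ 1 - x),
      mul_nonneg (by linarith : (0:ℝ) ≤ 1 - 3/2*x) (by linarith : (0:ℝ) ≤ 1 - y),
      mul_nonneg (by linarith : (0:ℝ) ≤ 1 - 2*s) (by linarith : (0:ℝ) ≤ 1 - 2*t)]
  · linarith [mul_nonneg (by linarith : (0:ℝ) ≤ 1 - y/2) (by linarith : (0:ℝ) ≤ 1 - x),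
      mul_nonneg hy0 (by linarith : (0:ℝ) ≤ 3/2*x - 1),
      mul_nonneg (by linarith : (0:ℝ) ≤ 1 - 2*s) (by linarith : (0:ℝ) ≤ 1 - 2*t)]


set_option maxHeartbeats 2000000 in
/-- the two congestion games M₅ and M₆ and the distribution ρ are
such that (i) the game-level reward (sum of both players' rewards) of every
joint action in the support of ρ coincides in M₅ and M₆; (ii) for every product
policy π, Gap_{M₅}(π) + Gap_{M₆}(π) ≥ 1/2. -/
theorem stmt8 :
    (∀ a : Fin 2 → Bool × Bool, 0 < ρ8 a →
        pay2 r1M5 r2M5 a 0 + pay2 r1M5 r2M5 a 1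
          = pay2 r1M6 r2M6 a 0 + pay2 r1M6 r2M6 a 1) ∧
    (∀ π : Fin 2 → Bool × Bool → ℝ, (∀ i, IsDist (π i)) →
        1/2 ≤ gapG r1M5 r2M5 π + gapG r1M6 r2M6 π) := by
  constructor
  · intro a ha
    rw [ρ8] at ha
    split_ifs at ha with h
    · rcases h with h | h | h | h | h <;> subst h <;>
        norm_num [pay2, nf1, nf2, r1M5, r2M5, r1M6, r2M6]
    · norm_num at ha
  · intro π hπ
    have hp00 := (hπ 0).1 (false,false)
    have hp01 := (hπ 0).1 (false,true)
    have hp10 := (hπ 0).1 (true,false)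
    have hp11 := (hπ 0).1 (true,true)
    have hq00 := (hπ 1).1 (false,false)
    have hq01 := (hπ 1).1 (false,true)
    have hq10 := (hπ 1).1 (true,false)
    have hq11 := (hπ 1).1 (true,true)
    have hp' : π 0 (false,false) + π 0 (false,true) + π 0 (true,false) + π 0 (true,true) = 1 := by
      have h := (hπ 0).2
      rw [Fintype.sum_prod_type] at h
      simp [Fintype.sum_bool] at h
      linarith
    have hq' : π 1 (false,false) + π 1 (false,true) + π 1 (true,false) + π 1 (true,true) = 1 := by
      have h := (hπ 1).2
      rw [Fintype.sum_prod_type] at h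
      simp [Fintype.sum_bool] at h
      linarith
    have habs1 : ∀ n, |r1M5 n| ≤ 1 := by intro n; rw [r1M5]; split_ifs <;> rw [abs_le] <;> norm_num
    have habs2 : ∀ n, |r2M5 n| ≤ 1 := by intro n; rw [r2M5]; rw [abs_le]; norm_num
    have habs3 : ∀ n, |r1M6 n| ≤ 1 := by intro n; rw [r1M6]; split_ifs <;> rw [abs_le] <;> norm_num
    have habs4 : ∀ n, |r2M6 n| ≤ 1 := by intro n; rw [r2M6]; split_ifs <;> rw [abs_le] <;> norm_num
    have hV50 : valG r1M5 r2M5 π 0 =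
        (π 0 (true,false) + π 0 (true,true)) * (1 - (π 1 (true,false) + π 1 (true,true))/2)
          - (π 0 (false,true) + π 0 (true,true)) := by
      rw [valG, sum_pi_two]
      simp [Fintype.sum_prod_type, pay2, nf1, nf2, r1M5, r2M5, Fin.prod_univ_two]
      linear_combination (π 0 (true,false) - π 0 (false,true)) * hq'
    have hV51 : valG r1M5 r2M5 π 1 =
        (π 1 (true,false) + π 1 (true,true)) * (1 - (π 0 (true,false) + π 0 (true,true))/2)
          - (π 1 (false,true) + π 1 (true,true)) := by
      rw [valG, sum_pi_two]
      simp [Fintype.sum_prod_type, pay2, nf1, nf2, r1M5, r2M5, Fin.prod_univ_two]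
      linear_combination (π 1 (true,false) - π 1 (false,true)) * hp'
    have hV60 : valG r1M6 r2M6 π 0 =
        (π 0 (true,false) + π 0 (true,true)) * (1 - 3/2*(π 1 (true,false) + π 1 (true,true)))
          + (π 0 (false,true) + π 0 (true,true)) * (1 - 2*(π 1 (false,true) + π 1 (true,true))) := by
      rw [valG, sum_pi_two]
      simp [Fintype.sum_prod_type, pay2, nf1, nf2, r1M6, r2M6, Fin.prod_univ_two]
      linear_combination (π 0 (true,false) + π 0 (false,true) + 2 * π 0 (true,true)) * hq'
    have hV61 : valG r1M6 r2M6 π 1 =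
        (π 1 (true,false) + π 1 (true,true)) * (1 - 3/2*(π 0 (true,false) + π 0 (true,true)))
          + (π 1 (false,true) + π 1 (true,true)) * (1 - 2*(π 0 (false,true) + π 0 (true,true))) := by
      rw [valG, sum_pi_two]
      simp [Fintype.sum_prod_type, pay2, nf1, nf2, r1M6, r2M6, Fin.prod_univ_two]
      linear_combination (π 1 (true,false) + π 1 (false,true) + 2 * π 1 (true,true)) * hp'
    have hD50 : valG r1M5 r2M5
        (Function.update π 0 (fun b => if b = (true,false) then (1:ℝ) else 0)) 0 =
        1 - (π 1 (true,false) + π 1 (true,true))/2 := by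
      rw [valG, sum_pi_two]
      simp [Fintype.sum_prod_type, pay2, nf1, nf2, r1M5, r2M5, Fin.prod_univ_two,
        Function.update]
      linear_combination hq'
    have hD51 : valG r1M5 r2M5
        (Function.update π 1 (fun b => if b = (true,false) then (1:ℝ) else 0)) 1 =
        1 - (π 0 (true,false) + π 0 (true,true))/2 := by
      rw [valG, sum_pi_two]
      simp [Fintype.sum_prod_type, pay2, nf1, nf2, r1M5, r2M5, Fin.prod_univ_two,
        Function.update]
      linear_combination hp'
    have hD60 : valG r1M6 r2M6
        (Function.update π 0 (fun b => if b = (true,true) then (1:ℝ) else 0)) 0 =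
        2 - 3/2*(π 1 (true,false) + π 1 (true,true)) - 2*(π 1 (false,true) + π 1 (true,true)) := by
      rw [valG, sum_pi_two]
      simp [Fintype.sum_prod_type, pay2, nf1, nf2, r1M6, r2M6, Fin.prod_univ_two,
        Function.update]
      linear_combination 2 * hq'
    have hD61 : valG r1M6 r2M6
        (Function.update π 1 (fun b => if b = (true,true) then (1:ℝ) else 0)) 1 =
        2 - 3/2*(π 0 (true,false) + π 0 (true,true)) - 2*(π 0 (false,true) + π 0 (true,true)) := by
      rw [valG, sum_pi_two]
      simp [Fintype.sum_prod_type, pay2, nf1, nf2, r1M6, r2M6, Fin.prod_univ_two,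
        Function.update]
      linear_combination 2 * hp'
    have hG61 : valG r1M6 r2M6
        (Function.update π 1 (fun b => if b = (false,true) then (1:ℝ) else 0)) 1 =
        1 - 2*(π 0 (false,true) + π 0 (true,true)) := by
      rw [valG, sum_pi_two]
      simp [Fintype.sum_prod_type, pay2, nf1, nf2, r1M6, r2M6, Fin.prod_univ_two,
        Function.update]
      linear_combination hp'
    have hg5a := gap_ge r1M5 r2M5 habs1 habs2 π hπ 0 _ (dirac_isDist (true,false))
    have hg5b := gap_ge r1M5 r2M5 habs1 habs2 π hπ 1 _ (dirac_isDist (true,false))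
    have hg60 := gap_ge r1M6 r2M6 habs3 habs4 π hπ 0 (π 0) (hπ 0)
    rw [Function.update_eq_self] at hg60
    have hg6D1 := gap_ge r1M6 r2M6 habs3 habs4 π hπ 0 _ (dirac_isDist (true,true))
    have hg6D2 := gap_ge r1M6 r2M6 habs3 habs4 π hπ 1 _ (dirac_isDist (true,true))
    have hg6G2 := gap_ge r1M6 r2M6 habs3 habs4 π hπ 1 _ (dirac_isDist (false,true))
    rw [hD50, hV50] at hg5a
    rw [hD51, hV51] at hg5b
    rw [hD60, hV60] at hg6D1
    rw [hD61, hV61] at hg6D2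
    rw [hG61, hV61] at hg6G2
    exact key (π 0 (true,false) + π 0 (true,true)) (π 1 (true,false) + π 1 (true,true))
      (π 0 (false,true) + π 0 (true,true)) (π 1 (false,true) + π 1 (true,true))
      (gapG r1M5 r2M5 π) (gapG r1M6 r2M6 π)
      (by linarith) (by linarith) (by linarith) (by linarith)
      (by linarith) (by linarith) (by linarith) (by linarith)
      (by linarith) (by linarith) (by linarith) (by linarith)
      (by linarith) (by linarith)
end

section
/- Let μ be a probability distribution on a finite set of d-dimensional vectors and let Σ = E_{A∼μ}[A Aᵀ]. Then for any c > 0, E_{A∼μ}[ √(Aᵀ (I + c Σ)^{-1} A) ] ≤ √(d/c). More precisely, E_{A∼μ}[Aᵀ (I + cΣ)^{-1} A] = (1/c)·tr(I − (I+cΣ)^{-1}) ≤ d/c, and the claim follows by Jensen's inequality. -/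
/-! Writing `M = 1 + cΣ`, the identity `M⁻¹ (cΣ) = M⁻¹ (M - 1) = 1 - M⁻¹` turns the expected
quadratic form `E[Aᵀ M⁻¹ A] = tr(M⁻¹ Σ)` into `(1/c) tr(1 - M⁻¹)`, which is at most `d/c`
because `M⁻¹` is positive definite. Jensen's inequality for the concave square root then
bounds `E[√(Aᵀ M⁻¹ A)]` by `√(d/c)`. -/

open Matrix Finset

namespace Matrix

variable {n ι R : Type*} [Fintype n] [Fintype ι]

lemma posSemidef_sum_smul_vecMulVec_self {w : ι → ℝ} (hw : ∀ k, 0 ≤ w k) (A : ι → n → ℝ) :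
    (∑ k, w k • vecMulVec (A k) (A k)).PosSemidef :=
  posSemidef_sum _ fun k _ => by
    simpa using (posSemidef_vecMulVec_self_star (A k)).smul (hw k)

lemma sum_mul_dotProduct_mulVec [CommRing R] (B : Matrix n n R) (w : ι → R) (A : ι → n → R) :
    ∑ k, w k * (A k ⬝ᵥ B *ᵥ A k) = trace (B * ∑ k, w k • vecMulVec (A k) (A k)) := by
  simp only [Matrix.mul_sum, trace_sum, Matrix.mul_smul, trace_smul, mul_vecMulVec,
    trace_vecMulVec, smul_eq_mul, dotProduct_comm]

variable [DecidableEq n]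

lemma trace_inv_one_add_smul_mul [Field R] (S : Matrix n n R) {c : R} (hc : c ≠ 0)
    (hM : IsUnit (1 + c • S).det) :
    trace ((1 + c • S)⁻¹ * S) = (1 / c) * trace (1 - (1 + c • S)⁻¹) := by
  have hcS : (1 + c • S)⁻¹ * (c • S) = 1 - (1 + c • S)⁻¹ :=
    calc (1 + c • S)⁻¹ * (c • S) = (1 + c • S)⁻¹ * ((1 + c • S) - 1) := by
          rw [add_sub_cancel_left]
      _ = 1 - (1 + c • S)⁻¹ := by rw [Matrix.mul_sub, nonsing_inv_mul _ hM, Matrix.mul_one]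
  rw [← hcS, Matrix.mul_smul, trace_smul, smul_eq_mul, ← mul_assoc, one_div,
    inv_mul_cancel₀ hc, one_mul]

lemma PosDef.trace_one_sub_inv_le {M : Matrix n n ℝ} (hM : M.PosDef) :
    trace (1 - M⁻¹) ≤ (Fintype.card n : ℝ) := by
  rw [trace_sub, trace_one]
  linarith [hM.inv.posSemidef.trace_nonneg]

end Matrix

lemma Real.sum_mul_sqrt_le_sqrt_sum_mul {ι : Type*} {t : Finset ι} {w x : ι → ℝ}
    (hw0 : ∀ k ∈ t, 0 ≤ w k) (hw1 : ∑ k ∈ t, w k = 1) (hx : ∀ k ∈ t, 0 ≤ x k) :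
    ∑ k ∈ t, w k * √(x k) ≤ √(∑ k ∈ t, w k * x k) :=
  Real.strictConcaveOn_sqrt.concaveOn.le_map_sum hw0 hw1 hx

/-- let `μ = (w, A)` be a probability distribution on a finite
family of `d`-dimensional vectors and `Σ = E[A Aᵀ]`. Then
`E[Aᵀ (I + cΣ)⁻¹ A] = (1/c)·tr(I − (I+cΣ)⁻¹) ≤ d/c`, and by Jensen's
inequality `E[√(Aᵀ (I + cΣ)⁻¹ A)] ≤ √(d/c)`. -/
theorem stmt11 {d : ℕ} {ι : Type*} [Fintype ι]
    (w : ι → ℝ) (A : ι → Fin d → ℝ)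
    (hw0 : ∀ k, 0 ≤ w k) (hw1 : ∑ k, w k = 1) (c : ℝ) (hc : 0 < c) :
    (∑ k, w k * (A k ⬝ᵥ ((1 + c • ∑ j, w j • Matrix.vecMulVec (A j) (A j))⁻¹ *ᵥ A k))
        = (1/c) * Matrix.trace
            ((1 : Matrix (Fin d) (Fin d) ℝ)
              - (1 + c • ∑ j, w j • Matrix.vecMulVec (A j) (A j))⁻¹)) ∧
    (1/c) * Matrix.trace
        ((1 : Matrix (Fin d) (Fin d) ℝ)
          - (1 + c • ∑ j, w j • Matrix.vecMulVec (A j) (A j))⁻¹) ≤ d / c ∧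
    ∑ k, w k * Real.sqrt
        (A k ⬝ᵥ ((1 + c • ∑ j, w j • Matrix.vecMulVec (A j) (A j))⁻¹ *ᵥ A k))
      ≤ Real.sqrt (d / c) := by
  set S := ∑ j, w j • vecMulVec (A j) (A j)
  have hM : (1 + c • S).PosDef :=
    PosDef.one.add_posSemidef ((posSemidef_sum_smul_vecMulVec_self hw0 A).smul hc.le)
  have hmean : ∑ k, w k * (A k ⬝ᵥ (1 + c • S)⁻¹ *ᵥ A k)
      = (1 / c) * trace (1 - (1 + c • S)⁻¹) := by
    rw [sum_mul_dotProduct_mulVec, trace_inv_one_add_smul_mul S hc.ne' hM.det_pos.ne'.isUnit]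
  have hbound : (1 / c) * trace (1 - (1 + c • S)⁻¹) ≤ d / c := by
    rw [one_div_mul_eq_div]
    gcongr
    simpa using PosDef.trace_one_sub_inv_le hM
  refine ⟨hmean, hbound, ?_⟩
  have hquad : ∀ k ∈ univ, 0 ≤ A k ⬝ᵥ (1 + c • S)⁻¹ *ᵥ A k := fun k _ => by
    simpa using hM.inv.posSemidef.dotProduct_mulVec_nonneg (A k)
  calc ∑ k, w k * √(A k ⬝ᵥ (1 + c • S)⁻¹ *ᵥ A k)
      ≤ √(∑ k, w k * (A k ⬝ᵥ (1 + c • S)⁻¹ *ᵥ A k)) :=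
        Real.sum_mul_sqrt_le_sqrt_sum_mul (fun k _ => hw0 k) hw1 hquad
    _ ≤ √(d / c) := Real.sqrt_le_sqrt (hmean ▸ hbound)
end

section
/- In any finite congestion game, a pure-strategy Nash equilibrium exists. Specifically, any joint action maximizing Rosenthal's potential Φ(a) = Σ_{f ∈ F} Σ_{k=1}^{n^f(a)} r^f(k) is a pure Nash equilibrium, because a unilateral deviation by player i changes her reward by exactly the change in Φ. -/
/-! Removing player `i` from a profile lowers each count `n^f`, `f ∈ a_i`, by one, which deletes
exactly the top summand `r^f(n^f(a))` from the inner sum of Rosenthal's potential. So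
`Φ(a) = Φ(∅, a_{-i}) + r_i(a)`, and a unilateral deviation of `i` changes `Φ` and `r_i` by the
same amount. A maximizer of `Φ` over the finite set of joint actions is therefore a pure Nash
equilibrium. -/

open Finset Function

/-- Number of players selecting facility `f` under joint action `a`. -/
def nfC {m : ℕ} {Fac : Type*} [Fintype Fac] [DecidableEq Fac]
    (f : Fac) (a : Fin m → Finset Fac) : ℕ :=
  (Finset.univ.filter (fun j => f ∈ a j)).card

/-- Reward of player `i`: `Σ_{f ∈ a_i} r^f(n^f(a))`. -/
def payC {m : ℕ} {Fac : Type*} [Fintype Fac] [DecidableEq Fac]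
    (rf : Fac → ℕ → ℝ) (a : Fin m → Finset Fac) (i : Fin m) : ℝ :=
  ∑ f ∈ a i, rf f (nfC f a)

/-- Rosenthal's potential `Φ(a) = Σ_f Σ_{k=1}^{n^f(a)} r^f(k)`. -/
def rosenthal {m : ℕ} {Fac : Type*} [Fintype Fac] [DecidableEq Fac]
    (rf : Fac → ℕ → ℝ) (a : Fin m → Finset Fac) : ℝ :=
  ∑ f : Fac, ∑ k ∈ Finset.Icc 1 (nfC f a), rf f k

section CongestionGame

variable {m : ℕ} {Fac : Type*} [Fintype Fac] [DecidableEq Fac]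

theorem nfC_update (f : Fac) (a : Fin m → Finset Fac) (i : Fin m) (c : Finset Fac) :
    nfC f (update a i c) = nfC f (update a i ∅) + if f ∈ c then 1 else 0 := by
  simp only [nfC, card_filter, sum_eq_add_sum_sdiff_singleton_of_mem (mem_univ i), update_self,
    notMem_empty, if_false, zero_add, add_comm _ (ite _ _ _)]
  congr 1
  refine sum_congr rfl fun j hj => ?_
  rw [update_of_ne (by simpa using hj), update_of_ne (by simpa using hj)]

theorem sum_Icc_one_add_ite {M : Type*} [AddCommMonoid M] (g : ℕ → M) (n : ℕ) (p : Prop)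
    [Decidable p] :
    ∑ k ∈ Icc 1 (n + if p then 1 else 0), g k =
      ∑ k ∈ Icc 1 n, g k + if p then g (n + 1) else 0 := by
  split_ifs
  · exact sum_Icc_succ_top (Nat.le_add_left 1 n) g
  · simp

theorem payC_update_self (rf : Fac → ℕ → ℝ) (a : Fin m → Finset Fac) (i : Fin m)
    (c : Finset Fac) :
    payC rf (update a i c) i = ∑ f ∈ c, rf f (nfC f (update a i ∅) + 1) := by
  rw [payC, update_self]
  exact sum_congr rfl fun f hf => by rw [nfC_update, if_pos hf]

theorem rosenthal_update (rf : Fac → ℕ → ℝ) (a : Fin m → Finset Fac) (i : Fin m)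
    (c : Finset Fac) :
    rosenthal rf (update a i c) = rosenthal rf (update a i ∅) + payC rf (update a i c) i := by
  simp only [rosenthal, payC_update_self, nfC_update _ _ i c, sum_Icc_one_add_ite,
    sum_add_distrib, Fintype.sum_ite_mem]

theorem payC_update_sub_payC (rf : Fac → ℕ → ℝ) (a : Fin m → Finset Fac) (i : Fin m)
    (b : Finset Fac) :
    payC rf (update a i b) i - payC rf a i = rosenthal rf (update a i b) - rosenthal rf a := by
  have h := rosenthal_update rf a i (a i)
  rw [update_eq_self] at h
  rw [h, rosenthal_update rf a i b]
  ring

theorem payC_update_le_of_rosenthal_le (rf : Fac → ℕ → ℝ) {a : Fin m → Finset Fac} {i : Fin m}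
    {b : Finset Fac} (h : rosenthal rf (update a i b) ≤ rosenthal rf a) :
    payC rf (update a i b) i ≤ payC rf a i := by
  linarith [payC_update_sub_payC rf a i b]

end CongestionGame

/-- in any finite congestion game, a unilateral deviation changes
the deviating player's reward by exactly the change in Rosenthal's potential;
hence any joint action maximizing the potential (over the action sets `𝒜 i`)
is a pure Nash equilibrium, and in particular a pure NE exists. -/
theorem stmt19 {m : ℕ} {Fac : Type*} [Fintype Fac] [DecidableEq Fac]
    (𝒜 : Fin m → Finset (Finset Fac)) (h𝒜 : ∀ i, (𝒜 i).Nonempty)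
    (rf : Fac → ℕ → ℝ) :
    (∀ (a : Fin m → Finset Fac) (i : Fin m) (b : Finset Fac),
        payC rf (Function.update a i b) i - payC rf a i
          = rosenthal rf (Function.update a i b) - rosenthal rf a) ∧
    (∀ a : Fin m → Finset Fac, (∀ i, a i ∈ 𝒜 i) →
        (∀ a' : Fin m → Finset Fac, (∀ i, a' i ∈ 𝒜 i) →
            rosenthal rf a' ≤ rosenthal rf a) →
        ∀ i, ∀ b ∈ 𝒜 i, payC rf (Function.update a i b) i ≤ payC rf a i) ∧
    (∃ a : Fin m → Finset Fac, (∀ i, a i ∈ 𝒜 i) ∧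
        ∀ i, ∀ b ∈ 𝒜 i, payC rf (Function.update a i b) i ≤ payC rf a i) := by
  have maximizer_isNash : ∀ a : Fin m → Finset Fac, (∀ i, a i ∈ 𝒜 i) →
      (∀ a' : Fin m → Finset Fac, (∀ i, a' i ∈ 𝒜 i) → rosenthal rf a' ≤ rosenthal rf a) →
      ∀ i, ∀ b ∈ 𝒜 i, payC rf (update a i b) i ≤ payC rf a i := fun a ha hmax i b hb =>
    payC_update_le_of_rosenthal_le rf <|
      hmax _ <| (forall_update_iff a fun j x => x ∈ 𝒜 j).2 ⟨hb, fun j _ => ha j⟩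
  refine ⟨payC_update_sub_payC rf, maximizer_isNash, ?_⟩
  obtain ⟨a, ha, hmax⟩ := (Fintype.piFinset 𝒜).exists_max_image (rosenthal rf)
    (Fintype.piFinset_nonempty.2 h𝒜)
  rw [Fintype.mem_piFinset] at ha
  exact ⟨a, ha, maximizer_isNash a ha fun a' ha' => hmax a' (Fintype.mem_piFinset.2 ha')⟩
end
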